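/- Every SMTI instance admits at most one strong-SSNM; i.e., if M and M' are both strongly-stable (in the strong-stability sense) noncrossing matchings of the same SMTI instance, then M = M'. -/

import Mathlib

open scoped Classical

/-- An SMTI instance: men of type `Mty`, women of type `Wty`.
`mpref m w = some r` means `w` appears on `m`'s preference list with rank `r`
(smaller rank = more preferred; equal ranks = tied); `none` means `w` is not on `m`'s list.
Similarly for `wpref`.  A pair is acceptable when each lists the other. -/
structure SMTI (Mty : Type) (Wty : Type) where
  mpref : Mty → Wty → Option ℕ
  wpref : Wty → Mty → Option ℕ

namespace SMTI

variable {Mty Wty : Type}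

/-- Rank of an optional preference-list entry: `⊤` for an absent entry
(so that being single / unacceptable is worse than any listed partner). -/
def rk (o : Option ℕ) : ℕ∞ := o.elim ⊤ (fun r => (r : ℕ∞))

/-- `(m, w)` is an acceptable pair. -/
def Acc (I : SMTI Mty Wty) (m : Mty) (w : Wty) : Prop :=
  (I.mpref m w).isSome ∧ (I.wpref w m).isSome

/-- `M` is a matching: a set of acceptable pairs in which each person appears at most once. -/
def IsMatching (I : SMTI Mty Wty) (M : Finset (Mty × Wty)) : Prop :=
  (∀ p ∈ M, I.Acc p.1 p.2) ∧
  (∀ p ∈ M, ∀ q ∈ M, (p.1 = q.1 ∨ p.2 = q.2) → p = q)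

/-- Two pairs cross iff one pair's man is above the other pair's man
while its woman is below the other pair's woman. -/
def Crossing [Preorder Mty] [Preorder Wty] (p q : Mty × Wty) : Prop :=
  (p.1 < q.1 ∧ q.2 < p.2) ∨ (q.1 < p.1 ∧ p.2 < q.2)

/-- A set of pairs is noncrossing if no two of its pairs cross. -/
def Noncrossing [Preorder Mty] [Preorder Wty] (M : Finset (Mty × Wty)) : Prop :=
  ∀ p ∈ M, ∀ q ∈ M, ¬ Crossing p q

/-- `(m, w)` is a (weak) blocking pair for `M`: an acceptable pair not in `M`
such that `m` strictly prefers `w` to his partner in `M` (or is single) and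
`w` strictly prefers `m` to her partner in `M` (or is single). -/
def Blocks (I : SMTI Mty Wty) (M : Finset (Mty × Wty)) (m : Mty) (w : Wty) : Prop :=
  I.Acc m w ∧ (m, w) ∉ M ∧
  (∀ w', (m, w') ∈ M → rk (I.mpref m w) < rk (I.mpref m w')) ∧
  (∀ m', (m', w) ∈ M → rk (I.wpref w m) < rk (I.wpref w m'))

/-- A noncrossing (weak) blocking pair: a blocking pair crossing no pair of `M`. -/
def NCBlocks [Preorder Mty] [Preorder Wty] (I : SMTI Mty Wty) (M : Finset (Mty × Wty))
    (m : Mty) (w : Wty) : Prop :=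
  I.Blocks M m w ∧ ∀ q ∈ M, ¬ Crossing (m, w) q

/-- A strongly stable noncrossing matching (for SMTI in the weak-stability sense:
a weak-SSNM): a noncrossing matching admitting no (weak) blocking pair at all. -/
def IsSSNM [Preorder Mty] [Preorder Wty] (I : SMTI Mty Wty) (M : Finset (Mty × Wty)) : Prop :=
  I.IsMatching M ∧ Noncrossing M ∧ ∀ m w, ¬ I.Blocks M m w

/-- A weakly stable noncrossing matching: a noncrossing matching admitting
no noncrossing (weak) blocking pair. -/
def IsWSNM [Preorder Mty] [Preorder Wty] (I : SMTI Mty Wty) (M : Finset (Mty × Wty)) : Prop :=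
  I.IsMatching M ∧ Noncrossing M ∧ ∀ m w, ¬ I.NCBlocks M m w

/-- The instance has strict preference lists (no ties), i.e. it is an SMI instance. -/
def NoTies (I : SMTI Mty Wty) : Prop :=
  (∀ m w w', (I.mpref m w).isSome → I.mpref m w = I.mpref m w' → w = w') ∧
  (∀ w m m', (I.wpref w m).isSome → I.wpref w m = I.wpref w m' → m = m')

end SMTI

namespace SMTI

variable {Mty Wty : Type}

/-- `(m, w)` is a super blocking pair for `M`: an acceptable pair not in `M` such that
both `m` and `w` weakly prefer each other to their situation in `M`. -/
def SuperBlocks (I : SMTI Mty Wty) (M : Finset (Mty × Wty)) (m : Mty) (w : Wty) : Prop :=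
  I.Acc m w ∧ (m, w) ∉ M ∧
  (∀ w', (m, w') ∈ M → rk (I.mpref m w) ≤ rk (I.mpref m w')) ∧
  (∀ m', (m', w) ∈ M → rk (I.wpref w m) ≤ rk (I.wpref w m'))

/-- `(m, w)` is a strong blocking pair for `M`: an acceptable pair not in `M` such that
one member weakly prefers and the other member strictly prefers the pair to their
situation in `M`. -/
def StrongBlocks (I : SMTI Mty Wty) (M : Finset (Mty × Wty)) (m : Mty) (w : Wty) : Prop :=
  I.Acc m w ∧ (m, w) ∉ M ∧
  (((∀ w', (m, w') ∈ M → rk (I.mpref m w) ≤ rk (I.mpref m w')) ∧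
    (∀ m', (m', w) ∈ M → rk (I.wpref w m) < rk (I.wpref w m'))) ∨
   ((∀ w', (m, w') ∈ M → rk (I.mpref m w) < rk (I.mpref m w')) ∧
    (∀ m', (m', w) ∈ M → rk (I.wpref w m) ≤ rk (I.wpref w m'))))

/-- A super-WSNM: a noncrossing matching with no noncrossing super blocking pair. -/
def IsSuperWSNM [Preorder Mty] [Preorder Wty] (I : SMTI Mty Wty)
    (M : Finset (Mty × Wty)) : Prop :=
  I.IsMatching M ∧ Noncrossing M ∧
    ∀ m w, ¬ (I.SuperBlocks M m w ∧ ∀ q ∈ M, ¬ Crossing (m, w) q)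

/-- A strong-WSNM: a noncrossing matching with no noncrossing strong blocking pair. -/
def IsStrongWSNM [Preorder Mty] [Preorder Wty] (I : SMTI Mty Wty)
    (M : Finset (Mty × Wty)) : Prop :=
  I.IsMatching M ∧ Noncrossing M ∧
    ∀ m w, ¬ (I.StrongBlocks M m w ∧ ∀ q ∈ M, ¬ Crossing (m, w) q)

/-- A super-SSNM: a noncrossing matching with no super blocking pair. -/
def IsSuperSSNM [Preorder Mty] [Preorder Wty] (I : SMTI Mty Wty)
    (M : Finset (Mty × Wty)) : Prop :=
  I.IsMatching M ∧ Noncrossing M ∧ ∀ m w, ¬ I.SuperBlocks M m w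

/-- A strong-SSNM: a noncrossing matching with no strong blocking pair. -/
def IsStrongSSNM [Preorder Mty] [Preorder Wty] (I : SMTI Mty Wty)
    (M : Finset (Mty × Wty)) : Prop :=
  I.IsMatching M ∧ Noncrossing M ∧ ∀ m w, ¬ I.StrongBlocks M m w

end SMTI

/-!
Let `A`, `B` be strong-SSNMs and follow an alternating path from `(m, w) ∈ A` to `(m, w') ∈ B`,
then to the `A`-partner `m₂ ≠ m` of `w'`, then to the `B`-partner `w₂` of `m₂`, and so on.
If `w' < w`, noncrossing of `A` forces `m₂ < m`, and then noncrossing of `B` forces `w₂ < w'`: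
the women strictly decrease, so the path stops (reversing both orders handles `w < w'`).

The absence of strong blocking pairs nevertheless keeps such a path going in two situations.
First, when every man on it strictly prefers his `B`-partner: hence nobody strictly prefers
one matching to the other. Second, once this is known, whenever it starts at a pair of `A \ B`,
because a member of such a pair who is single in `B` would make it strongly blocking for `B`.
-/

theorem not_of_forall_exists_lt {α : Type*} [Preorder α] {P : α → Prop}
    (hfin : {a | P a}.Finite) (hdesc : ∀ a, P a → ∃ b < a, P b) (a : α) : ¬ P a := fun ha ↦ by
  obtain ⟨b, hb⟩ := hfin.exists_minimal ⟨a, ha⟩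
  obtain ⟨c, hcb, hc⟩ := hdesc b hb.prop
  exact hb.not_lt hc hcb

namespace SMTI

variable {Mty Wty : Type} {I : SMTI Mty Wty} {M A B : Finset (Mty × Wty)}
  {m m' : Mty} {w w' : Wty}

theorem IsMatching.fst_eq (hM : I.IsMatching M) (h : (m, w) ∈ M) (h' : (m', w) ∈ M) :
    m = m' :=
  congrArg Prod.fst (hM.2 _ h _ h' (Or.inr rfl))

theorem IsMatching.snd_eq (hM : I.IsMatching M) (h : (m, w) ∈ M) (h' : (m, w') ∈ M) :
    w = w' :=
  congrArg Prod.snd (hM.2 _ h _ h' (Or.inl rfl))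

theorem exists_rk_mpref_lt_of_not_strongBlocks (hM : ¬ I.StrongBlocks M m w) (hacc : I.Acc m w)
    (hmw : (m, w) ∉ M) (hw : ∀ m', (m', w) ∈ M → rk (I.wpref w m) < rk (I.wpref w m')) :
    ∃ w', (m, w') ∈ M ∧ rk (I.mpref m w') < rk (I.mpref m w) := by
  by_contra! hm
  exact hM ⟨hacc, hmw, Or.inl ⟨hm, hw⟩⟩

theorem exists_rk_wpref_lt_of_not_strongBlocks (hM : ¬ I.StrongBlocks M m w) (hacc : I.Acc m w)
    (hmw : (m, w) ∉ M) (hm : ∀ w', (m, w') ∈ M → rk (I.mpref m w) < rk (I.mpref m w')) :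
    ∃ m', (m', w) ∈ M ∧ rk (I.wpref w m') < rk (I.wpref w m) := by
  by_contra! hw
  exact hM ⟨hacc, hmw, Or.inr ⟨hm, hw⟩⟩

section LinearOrder

variable [LinearOrder Mty] [LinearOrder Wty]

theorem Noncrossing.fst_lt_of_snd_lt (hM : Noncrossing M) (h : (m, w) ∈ M) (h' : (m', w') ∈ M)
    (hw : w' < w) (hm : m' ≠ m) : m' < m :=
  (le_of_not_gt fun hlt ↦ hM _ h _ h' (Or.inl ⟨hlt, hw⟩)).lt_of_ne hm

theorem Noncrossing.snd_lt_of_fst_lt (hM : Noncrossing M) (h : (m, w) ∈ M) (h' : (m', w') ∈ M)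
    (hm : m' < m) (hw : w' ≠ w) : w' < w :=
  (le_of_not_gt fun hlt ↦ hM _ h _ h' (Or.inr ⟨hm, hlt⟩)).lt_of_ne hw

theorem Noncrossing.dual (hM : Noncrossing M) : Noncrossing (Mty := Mtyᵒᵈ) (Wty := Wtyᵒᵈ) M :=
  fun p hp q hq hpq ↦ hM p hp q hq hpq.symm

theorem not_zigzag_of_lt {P : Mty → Wty → Wty → Prop} (hB : I.IsMatching B)
    (hncA : Noncrossing A) (hncB : Noncrossing B)
    (hP : ∀ m w w', P m w w' → (m, w) ∈ A ∧ (m, w') ∈ B)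
    (hstep : ∀ m w w', P m w w' → ∃ m₂ ≠ m, ∃ w₂, P m₂ w' w₂) (hlt : w' < w) :
    ¬ P m w w' := by
  let Q : Wty → Prop := fun w ↦ ∃ m w', P m w w' ∧ w' < w
  have hfin : {w | Q w}.Finite :=
    (A.finite_toSet.image Prod.snd).subset fun w ⟨m, w', hmw, _⟩ ↦ ⟨(m, w), (hP _ _ _ hmw).1, rfl⟩
  refine fun h ↦ not_of_forall_exists_lt hfin ?_ w ⟨m, w', h, hlt⟩
  rintro w ⟨m, w', hmw, hlt⟩
  obtain ⟨hA₁, hB₁⟩ := hP _ _ _ hmw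
  obtain ⟨m₂, hm₂, w₂, hm₂w⟩ := hstep _ _ _ hmw
  obtain ⟨hA₂, hB₂⟩ := hP _ _ _ hm₂w
  have hm₂lt : m₂ < m := hncA.fst_lt_of_snd_lt hA₁ hA₂ hlt hm₂
  have hw₂lt : w₂ < w' :=
    hncB.snd_lt_of_fst_lt hB₁ hB₂ hm₂lt fun he ↦ hm₂ (hB.fst_eq (he ▸ hB₂) hB₁)
  exact ⟨w', hlt, m₂, w₂, hm₂w, hw₂lt⟩

theorem eq_of_zigzag {P : Mty → Wty → Wty → Prop} (hB : I.IsMatching B)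
    (hncA : Noncrossing A) (hncB : Noncrossing B)
    (hP : ∀ m w w', P m w w' → (m, w) ∈ A ∧ (m, w') ∈ B)
    (hstep : ∀ m w w', P m w w' → ∃ m₂ ≠ m, ∃ w₂, P m₂ w' w₂) (h : P m w w') : w = w' := by
  rcases lt_trichotomy w w' with hlt | heq | hgt
  · exact absurd h (not_zigzag_of_lt (Mty := Mtyᵒᵈ) (Wty := Wtyᵒᵈ)
      hB hncA.dual hncB.dual hP hstep hlt)
  · exact heq
  · exact absurd h (not_zigzag_of_lt hB hncA hncB hP hstep hgt)

theorem IsStrongSSNM.rk_mpref_le (hA : I.IsStrongSSNM A) (hB : I.IsStrongSSNM B)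
    (h : (m, w) ∈ A) (h' : (m, w') ∈ B) : rk (I.mpref m w) ≤ rk (I.mpref m w') := by
  by_contra! hlt
  have hne : w ≠ w' := by
    rintro rfl
    exact hlt.false
  refine hne (eq_of_zigzag hB.1 hA.2.1 hB.2.1
    (P := fun m w w' ↦ (m, w) ∈ A ∧ (m, w') ∈ B ∧ rk (I.mpref m w') < rk (I.mpref m w))
    (fun _ _ _ h ↦ ⟨h.1, h.2.1⟩) ?_ ⟨h, h', hlt⟩)
  rintro m w w' ⟨hA₁, hB₁, hlt₁⟩
  have hww' : w' ≠ w := by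
    rintro rfl
    exact hlt₁.false
  obtain ⟨m₂, hA₂, hlt₂⟩ := exists_rk_wpref_lt_of_not_strongBlocks (hA.2.2 m w') (hB.1.1 _ hB₁)
    (fun h ↦ hww' (hA.1.snd_eq h hA₁)) fun w'' h'' ↦ hA.1.snd_eq hA₁ h'' ▸ hlt₁
  have hm₂ : m₂ ≠ m := by
    rintro rfl
    exact hlt₂.false
  obtain ⟨w₂, hB₂, hlt₃⟩ := exists_rk_mpref_lt_of_not_strongBlocks (hB.2.2 m₂ w') (hA.1.1 _ hA₂)
    (fun h ↦ hm₂ (hB.1.fst_eq h hB₁)) fun m'' h'' ↦ hB.1.fst_eq hB₁ h'' ▸ hlt₂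
  exact ⟨m₂, hm₂, w₂, hA₂, hB₂, hlt₃⟩

theorem IsStrongSSNM.rk_wpref_le (hA : I.IsStrongSSNM A) (hB : I.IsStrongSSNM B)
    (h : (m, w) ∈ A) (h' : (m', w) ∈ B) : rk (I.wpref w m) ≤ rk (I.wpref w m') := by
  by_contra! hlt
  have hm : m' ≠ m := by
    rintro rfl
    exact hlt.false
  obtain ⟨w'', hA', hlt'⟩ := exists_rk_mpref_lt_of_not_strongBlocks (hA.2.2 m' w) (hB.1.1 _ h')
    (fun h'' ↦ hm (hA.1.fst_eq h'' h)) fun m'' h'' ↦ hA.1.fst_eq h h'' ▸ hlt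
  exact (hB.rk_mpref_le hA h' hA').not_gt hlt'

theorem IsStrongSSNM.exists_snd_mem (hA : I.IsStrongSSNM A) (hB : I.IsStrongSSNM B)
    (h : (m, w) ∈ A) (hn : (m, w) ∉ B) : ∃ w', (m, w') ∈ B := by
  by_contra! hm
  obtain ⟨m', h', hlt⟩ := exists_rk_wpref_lt_of_not_strongBlocks (hB.2.2 m w) (hA.1.1 _ h) hn
    fun w' h' ↦ absurd h' (hm w')
  exact (hA.rk_wpref_le hB h h').not_gt hlt

theorem IsStrongSSNM.exists_fst_mem (hA : I.IsStrongSSNM A) (hB : I.IsStrongSSNM B)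
    (h : (m, w) ∈ A) (hn : (m, w) ∉ B) : ∃ m', (m', w) ∈ B := by
  by_contra! hw
  obtain ⟨w', h', hlt⟩ := exists_rk_mpref_lt_of_not_strongBlocks (hB.2.2 m w) (hA.1.1 _ h) hn
    fun m' h' ↦ absurd h' (hw m')
  exact (hA.rk_mpref_le hB h h').not_gt hlt

theorem IsStrongSSNM.subset (hA : I.IsStrongSSNM A) (hB : I.IsStrongSSNM B) : A ⊆ B := by
  rintro ⟨m, w⟩ h
  by_contra hn
  obtain ⟨w', h'⟩ := hA.exists_snd_mem hB h hn
  refine hn (eq_of_zigzag hB.1 hA.2.1 hB.2.1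
    (P := fun m w w' ↦ (m, w) ∈ A ∧ (m, w) ∉ B ∧ (m, w') ∈ B)
    (fun _ _ _ h ↦ ⟨h.1, h.2.2⟩) ?_ ⟨h, hn, h'⟩ ▸ h')
  rintro m w w' ⟨hA₁, hn₁, hB₁⟩
  have hnA : (m, w') ∉ A := fun h ↦ hn₁ (hA.1.snd_eq hA₁ h ▸ hB₁)
  obtain ⟨m₂, hA₂⟩ := hB.exists_fst_mem hA hB₁ hnA
  have hm₂ : m₂ ≠ m := by
    rintro rfl
    exact hnA hA₂
  have hnB : (m₂, w') ∉ B := fun h ↦ hm₂ (hB.1.fst_eq h hB₁)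
  obtain ⟨w₂, hB₂⟩ := hA.exists_snd_mem hB hA₂ hnB
  exact ⟨m₂, hm₂, w₂, hA₂, hnB, hB₂⟩

end LinearOrder

end SMTI

/-- every SMTI instance admits at most one strong-SSNM. -/
theorem stmt18 {n : ℕ} (I : SMTI (Fin n) (Fin n))
    (M M' : Finset (Fin n × Fin n))
    (hM : I.IsStrongSSNM M) (hM' : I.IsStrongSSNM M') :
    M = M' :=
  (hM.subset hM').antisymm (hM'.subset hM)
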